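/- arXiv:1912.01063 — 9 statements merged into one kernel-verified Lean document; each statement's English description precedes it below -/
import Mathlib

section
/- Let T : H → H be an isometry and let W be a nonempty closed convex subset of Fix T. Then T ∘ P_W = P_W = P_W ∘ T, where P_W denotes the metric projection onto W. -/
/-- Uniqueness of the nearest point in a convex set in a Hilbert space. -/
lemma proj_unique_aux {H : Type*} [NormedAddCommGroup H] [InnerProductSpace ℝ H]
    {W : Set H} (hWco : Convex ℝ W) {x p q : H} (hp : p ∈ W) (hq : q ∈ W)
    (hpmin : ∀ w ∈ W, ‖x - p‖ ≤ ‖x - w‖) (hqmin : ∀ w ∈ W, ‖x - q‖ ≤ ‖x - w‖) :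
    p = q := by
  have hm : (1/2 : ℝ) • p + (1/2 : ℝ) • q ∈ W := hWco hp hq (by norm_num) (by norm_num) (by norm_num)
  set m := (1/2 : ℝ) • p + (1/2 : ℝ) • q with hmdef
  have hpar := parallelogram_law_with_norm ℝ (x - p) (x - q)
  have h1 : (x - p) + (x - q) = (2 : ℝ) • (x - m) := by
    rw [hmdef]; module
  have h2 : ‖(x - p) + (x - q)‖ = 2 * ‖x - m‖ := by
    rw [h1, norm_smul]; simp
  have hpq : ‖x - p‖ = ‖x - q‖ :=
    le_antisymm (hpmin q hq) (hqmin p hp)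
  have hxm : ‖x - p‖ ≤ ‖x - m‖ := hpmin m hm
  have h3 : ‖(x - p) - (x - q)‖ ^ 2 ≤ 0 := by
    nlinarith [norm_nonneg ((x-p)+(x-q)), norm_nonneg (x - m), norm_nonneg (x - p)]
  have h4 : ‖(x - p) - (x - q)‖ = 0 := by
    nlinarith [norm_nonneg ((x-p)-(x-q))]
  have h5 : (x - p) - (x - q) = 0 := norm_eq_zero.mp h4
  have h6 : q - p = 0 := by rw [← h5]; abel
  exact (sub_eq_zero.mp h6).symm

/-- If `T` is an isometry and `W` is a nonempty closed convex subset of `Fix T`, then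
`T ∘ P_W = P_W = P_W ∘ T` where `P_W` is the metric projection onto `W`. -/
theorem isometry_comm_proj {H : Type*} [NormedAddCommGroup H] [InnerProductSpace ℝ H]
    [CompleteSpace H] (T : H → H) (hT : ∀ x y : H, ‖T x - T y‖ = ‖x - y‖)
    (W : Set H) (hWne : W.Nonempty) (hWcl : IsClosed W) (hWco : Convex ℝ W)
    (hWF : W ⊆ {x : H | T x = x})
    (P : H → H) (hP : ∀ x : H, P x ∈ W ∧ ∀ w ∈ W, ‖x - P x‖ ≤ ‖x - w‖) :
    (∀ x : H, T (P x) = P x) ∧ (∀ x : H, P (T x) = P x) := by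
  have hfix : ∀ x, T (P x) = P x := fun x => hWF (hP x).1
  refine ⟨hfix, fun x => ?_⟩
  -- key: for w ∈ W, ‖T x - w‖ = ‖x - w‖
  have hdist : ∀ w ∈ W, ‖T x - w‖ = ‖x - w‖ := fun w hw => by
    conv_lhs => rw [← show T w = w from hWF hw]
    exact hT x w
  -- P (T x) minimizes distance to x as well
  have h1 : ∀ w ∈ W, ‖x - P (T x)‖ ≤ ‖x - w‖ := fun w hw => by
    rw [← hdist _ (hP (T x)).1, ← hdist w hw]
    exact (hP (T x)).2 w hw
  exact proj_unique_aux hWco (hP (T x)).1 (hP x).1 h1 (hP x).2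
end

section
/- Suppose H = ℝⁿ. Let T : H → H be linear and α-averaged with α ∈ (0,1), and let F : H → H be nonexpansive and linear with Fix T ∩ ran F = {0}. Then the operator norm ‖T ∘ F‖ < 1. -/
/-! An averaged map `(1 - α) • x + α • G x` with `‖G x‖ ≤ ‖x‖` strictly shrinks every vector
that `G` does not fix, because the Euclidean norm is strictly convex. With `G 0 = 0` (from the
linearity of `T`) and `Fix T ∩ ran F = {0}`, this gives `‖T (F x)‖ < ‖x‖` for every `x ≠ 0`; in
finite dimension the unit sphere is compact, so the supremum `‖T ∘ F‖` is attained and is `< 1`. -/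

theorem norm_averaged_lt_of_ne {E : Type*} [NormedAddCommGroup E] [NormedSpace ℝ E]
    [StrictConvexSpace ℝ E] {α : ℝ} (hα : α ∈ Set.Ioo (0 : ℝ) 1) {x y : E} (hy : ‖y‖ ≤ ‖x‖)
    (hne : x ≠ y) : ‖(1 - α) • x + α • y‖ < ‖x‖ :=
  norm_combo_lt_of_ne le_rfl hy hne (sub_pos.2 hα.2) hα.1 (sub_add_cancel 1 α)

theorem ContinuousLinearMap.opNorm_lt_one_of_norm_apply_lt {E F : Type*} [NormedAddCommGroup E]
    [NormedSpace ℝ E] [FiniteDimensional ℝ E] [SeminormedAddCommGroup F] [NormedSpace ℝ F]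
    (A : E →L[ℝ] F) (h : ∀ x, x ≠ 0 → ‖A x‖ < ‖x‖) : ‖A‖ < 1 := by
  rcases subsingleton_or_nontrivial E with hE | hE
  · rw [Subsingleton.elim A 0, norm_zero]
    exact one_pos
  obtain ⟨x, hx, hmax⟩ := (isCompact_sphere (0 : E) 1).exists_isMaxOn
    (NormedSpace.sphere_nonempty.2 zero_le_one) A.continuous.norm.continuousOn
  have hx1 : ‖x‖ = 1 := mem_sphere_zero_iff_norm.1 hx
  calc ‖A‖ ≤ ‖A x‖ := A.opNorm_le_of_unit_norm (norm_nonneg _) fun z hz =>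
        hmax (mem_sphere_zero_iff_norm.2 hz)
    _ < 1 := hx1 ▸ h x (ne_zero_of_norm_ne_zero (hx1 ▸ one_ne_zero))

/-- In `ℝⁿ`, if `T` is linear and `α`-averaged, `F` is linear nonexpansive, and
`Fix T ∩ ran F = {0}`, then `‖T ∘ F‖ < 1`. -/
theorem opNorm_comp_lt_one {n : ℕ}
    (α : ℝ) (hα : α ∈ Set.Ioo (0 : ℝ) 1)
    (T F : EuclideanSpace ℝ (Fin n) →L[ℝ] EuclideanSpace ℝ (Fin n))
    (G : EuclideanSpace ℝ (Fin n) → EuclideanSpace ℝ (Fin n))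
    (hG : ∀ x y, ‖G x - G y‖ ≤ ‖x - y‖)
    (hT : ∀ x, T x = (1 - α) • x + α • G x)
    (hF : ∀ x, ‖F x‖ ≤ ‖x‖)
    (hFix : {x | T x = x} ∩ Set.range F = {0}) :
    ‖T ∘L F‖ < 1 := by
  have hG0 : G 0 = 0 := by
    have h := hT 0
    rw [map_zero, smul_zero, zero_add, eq_comm, smul_eq_zero] at h
    exact h.resolve_left hα.1.ne'
  refine (T ∘L F).opNorm_lt_one_of_norm_apply_lt fun x hx => ?_
  by_cases hFx : F x = 0
  · simpa [hFx] using norm_pos_iff.2 hx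
  have hGFx : G (F x) ≠ F x := fun hfix => hFx <| by
    have hmem : F x ∈ {y | T y = y} ∩ Set.range F :=
      ⟨by rw [Set.mem_ofPred_eq, hT, hfix, ← add_smul, sub_add_cancel, one_smul], x, rfl⟩
    rwa [hFix] at hmem
  calc ‖(T ∘L F) x‖ = ‖(1 - α) • F x + α • G (F x)‖ := by
        rw [ContinuousLinearMap.comp_apply, hT]
    _ < ‖F x‖ := norm_averaged_lt_of_ne hα (by simpa [hG0] using hG (F x) 0) hGFx.symm
    _ ≤ ‖x‖ := hF x
end

section
/- Suppose H = ℝⁿ. Let T : H → H be linear and α-averaged with α ∈ (0,1). Then ‖T ∘ P_{(Fix T)^⊥}‖ < 1, where P_{(Fix T)^⊥} is the orthogonal projection onto the orthogonal complement of Fix T. -/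
/-!
A nonexpansive `G` with `T = (1 - α) Id + α G` linear fixes `0`, so `‖G x‖ ≤ ‖x‖`; by strict
convexity of the Euclidean norm, `‖T x‖ < ‖x‖` unless `G x = x`, i.e. unless `x ∈ Fix T`. Hence
`T ∘ P_{(Fix T)ᗮ}` shrinks the norm of every nonzero vector, and since the unit ball of `ℝⁿ` is
compact its operator norm is attained, so it is `< 1`.
-/

open Metric Set

namespace ContinuousLinearMap

variable {𝕜 E F : Type*} [DenselyNormedField 𝕜] [NormedAddCommGroup E] [NormedSpace 𝕜 E]
  [ProperSpace E] [SeminormedAddCommGroup F] [NormedSpace 𝕜 F]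

theorem exists_mem_closedBall_norm_apply_eq_opNorm (f : E →L[𝕜] F) :
    ∃ x ∈ closedBall (0 : E) 1, ‖f x‖ = ‖f‖ := by
  rw [← sSup_unitClosedBall_eq_norm]
  exact (isCompact_closedBall 0 1).image (continuous_norm.comp f.continuous)
    |>.sSup_mem ((nonempty_closedBall.mpr zero_le_one).image _)

theorem opNorm_lt_one_of_norm_apply_lt_s6 (f : E →L[𝕜] F) (h : ∀ x ≠ 0, ‖f x‖ < ‖x‖) :
    ‖f‖ < 1 := by
  obtain ⟨x, hx, hfx⟩ := f.exists_mem_closedBall_norm_apply_eq_opNorm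
  rw [← hfx]
  rcases eq_or_ne x 0 with rfl | hx0
  · simp
  · exact (h x hx0).trans_le (mem_closedBall_zero_iff.mp hx)

end ContinuousLinearMap

section StrictConvex

variable {E : Type*} [NormedAddCommGroup E] [NormedSpace ℝ E] [StrictConvexSpace ℝ E]

theorem norm_one_sub_smul_add_smul_lt {α : ℝ} (hα : α ∈ Ioo (0 : ℝ) 1) {x y : E}
    (hy : ‖y‖ ≤ ‖x‖) (hne : (1 - α) • x + α • y ≠ x) : ‖(1 - α) • x + α • y‖ < ‖x‖ := by
  refine norm_combo_lt_of_ne le_rfl hy ?_ (sub_pos.mpr hα.2) hα.1 (sub_add_cancel 1 α)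
  rintro rfl
  exact hne (by module)

theorem norm_apply_lt_of_apply_ne {α : ℝ} (hα : α ∈ Ioo (0 : ℝ) 1) (T : E →L[ℝ] E) (G : E → E)
    (hG : ∀ x y, ‖G x - G y‖ ≤ ‖x - y‖) (hT : ∀ x, T x = (1 - α) • x + α • G x) {x : E}
    (hx : T x ≠ x) : ‖T x‖ < ‖x‖ := by
  have hG0 : G 0 = 0 := by
    simpa [hα.1.ne'] using (hT 0).symm
  have hGx : ‖G x‖ ≤ ‖x‖ := by simpa [hG0] using hG x 0
  rw [hT] at hx ⊢
  exact norm_one_sub_smul_add_smul_lt hα hGx hx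

end StrictConvex

section InnerProduct

variable {E : Type*} [NormedAddCommGroup E] [InnerProductSpace ℝ E]

theorem apply_ne_self_of_mem_orthogonal_ker (T : E →L[ℝ] E) {x : E}
    (hx : x ∈ (LinearMap.ker ((1 - T : E →L[ℝ] E) : E →ₗ[ℝ] E))ᗮ) (hx0 : x ≠ 0) : T x ≠ x := by
  intro hTx
  have hxK : x ∈ LinearMap.ker ((1 - T : E →L[ℝ] E) : E →ₗ[ℝ] E) := by simp [hTx]
  exact hx0 (Submodule.disjoint_def.mp (Submodule.orthogonal_disjoint _) x hxK hx)

theorem norm_comp_orthogonalProjection_ker_apply_lt [CompleteSpace E] (T : E →L[ℝ] E)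
    (hT : ∀ x, T x ≠ x → ‖T x‖ < ‖x‖) {x : E} (hx : x ≠ 0) :
    ‖(T ∘L (LinearMap.ker ((1 - T : E →L[ℝ] E) : E →ₗ[ℝ] E))ᗮ.subtypeL ∘L
      Submodule.orthogonalProjectionOnto (LinearMap.ker ((1 - T : E →L[ℝ] E) : E →ₗ[ℝ] E))ᗮ) x‖
      < ‖x‖ := by
  set K := LinearMap.ker ((1 - T : E →L[ℝ] E) : E →ₗ[ℝ] E)
  set p : E := Kᗮ.orthogonalProjectionOnto x
  change ‖T p‖ < ‖x‖
  rcases eq_or_ne p 0 with hp0 | hp0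
  · simpa [hp0] using hx
  · calc ‖T p‖ < ‖p‖ :=
          hT p (apply_ne_self_of_mem_orthogonal_ker T (Kᗮ.orthogonalProjectionOnto x).2 hp0)
      _ ≤ ‖x‖ := Kᗮ.norm_orthogonalProjectionOnto_apply_le x

end InnerProduct

/-- In `ℝⁿ`, if `T` is linear and `α`-averaged with `α ∈ (0,1)`, then
`‖T ∘ P_{(Fix T)ᗮ}‖ < 1`. -/
theorem opNorm_comp_projPerp_lt_one {n : ℕ}
    (α : ℝ) (hα : α ∈ Set.Ioo (0 : ℝ) 1)
    (T : EuclideanSpace ℝ (Fin n) →L[ℝ] EuclideanSpace ℝ (Fin n))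
    (G : EuclideanSpace ℝ (Fin n) → EuclideanSpace ℝ (Fin n))
    (hG : ∀ x y, ‖G x - G y‖ ≤ ‖x - y‖)
    (hT : ∀ x, T x = (1 - α) • x + α • G x) :
    ‖T ∘L ((LinearMap.ker ((1 - T : EuclideanSpace ℝ (Fin n) →L[ℝ] EuclideanSpace ℝ (Fin n)) :
          EuclideanSpace ℝ (Fin n) →ₗ[ℝ] EuclideanSpace ℝ (Fin n)))ᗮ.subtypeL ∘L
        Submodule.orthogonalProjectionOnto (LinearMap.ker ((1 - T : EuclideanSpace ℝ (Fin n) →L[ℝ] EuclideanSpace ℝ (Fin n)) :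
          EuclideanSpace ℝ (Fin n) →ₗ[ℝ] EuclideanSpace ℝ (Fin n)))ᗮ)‖ < 1 :=
  ContinuousLinearMap.opNorm_lt_one_of_norm_apply_lt_s6 _ fun _ hx =>
    norm_comp_orthogonalProjection_ker_apply_lt T
      (fun _ => norm_apply_lt_of_apply_ne hα T G hG hT) hx
end

section
/- Suppose H = ℝⁿ. Let T : H → H be linear and α-averaged with α ∈ (0,1). Then for every x ∈ H and every k ∈ ℕ, ‖T^k x - P_{Fix T} x‖ ≤ ‖T ∘ P_{(Fix T)^⊥}‖^k · ‖x - P_{Fix T} x‖; consequently T^k x converges linearly to P_{Fix T} x with rate ‖T ∘ P_{(Fix T)^⊥}‖ < 1. -/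
/-!
An averaged operator `T = (1 - α) Id + α G` is nonexpansive, and by strict convexity of the
Euclidean norm it strictly decreases the norm of every vector it does not fix. Since `‖T‖ ≤ 1`,
`T` and its adjoint have the same fixed vectors, so `(Fix T)ᗮ` is `T`-invariant and `T` acts there
as `T ∘ P_{(Fix T)ᗮ}`; writing `T^k x - P_{Fix T} x = T^k (x - P_{Fix T} x)` gives the estimate. By
compactness of the unit ball, the strict decrease of norms off `Fix T` makes
`‖T ∘ P_{(Fix T)ᗮ}‖ < 1`.
-/

open ContinuousLinearMap

section Averaged

variable {E : Type*} [NormedAddCommGroup E] [NormedSpace ℝ E] {α : ℝ} {T : E →L[ℝ] E}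
  {G : E → E}

theorem map_zero_of_averaged (hα : α ≠ 0) (hT : ∀ x, T x = (1 - α) • x + α • G x) : G 0 = 0 := by
  simpa [hα] using (hT 0).symm

theorem opNorm_le_one_of_averaged (hα0 : 0 < α) (hα1 : α ≤ 1)
    (hG : ∀ x y, ‖G x - G y‖ ≤ ‖x - y‖) (hT : ∀ x, T x = (1 - α) • x + α • G x) : ‖T‖ ≤ 1 := by
  refine T.opNorm_le_bound zero_le_one fun x ↦ ?_
  have hGx : ‖G x‖ ≤ ‖x‖ := by simpa [map_zero_of_averaged hα0.ne' hT] using hG x 0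
  calc ‖T x‖ ≤ ‖(1 - α) • x‖ + ‖α • G x‖ := hT x ▸ norm_add_le _ _
    _ = (1 - α) * ‖x‖ + α * ‖G x‖ := by
      rw [norm_smul, norm_smul, Real.norm_of_nonneg (by linarith), Real.norm_of_nonneg hα0.le]
    _ ≤ 1 * ‖x‖ := by nlinarith

theorem norm_apply_lt_of_averaged [StrictConvexSpace ℝ E] (hα0 : 0 < α) (hα1 : α < 1)
    (hG : ∀ x y, ‖G x - G y‖ ≤ ‖x - y‖) (hT : ∀ x, T x = (1 - α) • x + α • G x) {x : E}
    (hx : T x ≠ x) : ‖T x‖ < ‖x‖ := by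
  have hGx : ‖G x‖ ≤ ‖x‖ := by simpa [map_zero_of_averaged hα0.ne' hT] using hG x 0
  have hGx_ne : x ≠ G x := by
    rintro hfix
    exact hx (by rw [hT x, ← hfix]; module)
  rw [hT x]
  exact norm_combo_lt_of_ne le_rfl hGx hGx_ne (by linarith) hα0 (by ring)

end Averaged

section Hilbert

variable {E : Type*} [NormedAddCommGroup E] [InnerProductSpace ℝ E]

abbrev ContinuousLinearMap.fixedSubspace (T : E →L[ℝ] E) : Submodule ℝ E :=
  LinearMap.ker ((1 - T : E →L[ℝ] E) : E →ₗ[ℝ] E)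

theorem ContinuousLinearMap.mem_fixedSubspace {T : E →L[ℝ] E} {x : E} :
    x ∈ T.fixedSubspace ↔ T x = x := by
  simp [sub_eq_zero, eq_comm (a := T x)]

theorem ContinuousLinearMap.pow_apply_of_apply_eq_self {T : E →L[ℝ] E} {x : E} (hx : T x = x)
    (k : ℕ) : (T ^ k) x = x := by
  induction k with
  | zero => rfl
  | succ k ih => rw [pow_succ, mul_apply_eq_comp, hx, ih]

theorem ContinuousLinearMap.norm_pow_apply_le_of_mapsTo (T : E →L[ℝ] E) {U : Submodule ℝ E}
    [U.HasOrthogonalProjection] (hU : ∀ w ∈ U, T w ∈ U) {w : E} (hw : w ∈ U) (k : ℕ) :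
    ‖(T ^ k) w‖ ≤ ‖T ∘L U.starProjection‖ ^ k * ‖w‖ := by
  induction k generalizing w with
  | zero => simp
  | succ k ih =>
    have hTw : T w = (T ∘L U.starProjection) w := by
      simp [Submodule.starProjection_eq_self_iff.mpr hw]
    calc ‖(T ^ (k + 1)) w‖ = ‖(T ^ k) (T w)‖ := by rw [pow_succ, mul_apply_eq_comp]
      _ ≤ ‖T ∘L U.starProjection‖ ^ k * ‖T w‖ := ih (hU w hw)
      _ ≤ ‖T ∘L U.starProjection‖ ^ k * (‖T ∘L U.starProjection‖ * ‖w‖) := by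
        rw [hTw]; gcongr; exact le_opNorm _ _
      _ = ‖T ∘L U.starProjection‖ ^ (k + 1) * ‖w‖ := by ring

variable [CompleteSpace E]

open RealInnerProductSpace in
theorem ContinuousLinearMap.adjoint_apply_eq_self {T : E →L[ℝ] E} (hT : ‖T‖ ≤ 1) {v : E}
    (hv : T v = v) : adjoint T v = v := by
  have hnorm : ‖adjoint T v‖ ≤ ‖v‖ :=
    (adjoint T).le_of_opNorm_le (by rwa [LinearIsometryEquiv.norm_map]) v |>.trans_eq (one_mul _)
  have hinner : ⟪adjoint T v, v⟫ = ‖v‖ ^ 2 := by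
    rw [adjoint_inner_left, hv, real_inner_self_eq_norm_sq]
  have hsq : ‖adjoint T v - v‖ ^ 2 ≤ 0 := by
    rw [norm_sub_sq_real, hinner]
    nlinarith [norm_nonneg (adjoint T v)]
  exact sub_eq_zero.mp (norm_eq_zero.mp (by nlinarith [norm_nonneg (adjoint T v - v)]))

theorem ContinuousLinearMap.apply_mem_orthogonal_fixedSubspace {T : E →L[ℝ] E} (hT : ‖T‖ ≤ 1)
    {w : E} (hw : w ∈ T.fixedSubspaceᗮ) : T w ∈ T.fixedSubspaceᗮ := by
  intro v hv
  rw [← adjoint_inner_left, adjoint_apply_eq_self hT (mem_fixedSubspace.mp hv)]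
  exact hw v hv

theorem ContinuousLinearMap.norm_pow_apply_sub_starProjection_le {T : E →L[ℝ] E} (hT : ‖T‖ ≤ 1)
    (x : E) (k : ℕ) :
    ‖(T ^ k) x - T.fixedSubspace.starProjection x‖ ≤
      ‖T ∘L T.fixedSubspaceᗮ.starProjection‖ ^ k * ‖x - T.fixedSubspace.starProjection x‖ := by
  have hfix := mem_fixedSubspace.mp (T.fixedSubspace.starProjection_apply_mem x)
  rw [← pow_apply_of_apply_eq_self hfix k, ← map_sub, pow_apply_of_apply_eq_self hfix k]
  exact T.norm_pow_apply_le_of_mapsTo (fun _ ↦ apply_mem_orthogonal_fixedSubspace hT)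
    (Submodule.sub_starProjection_mem_orthogonal x) k

end Hilbert

section FiniteDimensional

variable {E F : Type*} [NormedAddCommGroup E] [NormedSpace ℝ E] [ProperSpace E]
  [SeminormedAddCommGroup F] [NormedSpace ℝ F]

theorem ContinuousLinearMap.opNorm_lt_one_of_norm_apply_lt_s7 (f : E →L[ℝ] F)
    (hf : ∀ x ≠ 0, ‖f x‖ < ‖x‖) : ‖f‖ < 1 := by
  obtain ⟨x₀, hx₀, hmax⟩ := (isCompact_closedBall (0 : E) 1).exists_isMaxOn
    (Metric.nonempty_closedBall.mpr zero_le_one) (continuous_norm.comp f.continuous).continuousOn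
  have hx₀_norm : ‖x₀‖ ≤ 1 := mem_closedBall_zero_iff.mp hx₀
  have hlt : ‖f x₀‖ < 1 := by
    rcases eq_or_ne x₀ 0 with rfl | hne
    · simp
    · exact (hf x₀ hne).trans_le hx₀_norm
  refine (f.opNorm_le_of_unit_norm (norm_nonneg _) fun x hx ↦ ?_).trans_lt hlt
  exact hmax (mem_closedBall_zero_iff.mpr hx.le)

theorem ContinuousLinearMap.opNorm_comp_starProjection_orthogonal_lt_one {E : Type*}
    [NormedAddCommGroup E] [InnerProductSpace ℝ E] [FiniteDimensional ℝ E] {T : E →L[ℝ] E}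
    (hT : ∀ x, T x ≠ x → ‖T x‖ < ‖x‖) : ‖T ∘L T.fixedSubspaceᗮ.starProjection‖ < 1 := by
  refine opNorm_lt_one_of_norm_apply_lt_s7 _ fun x hx ↦ ?_
  set y := T.fixedSubspaceᗮ.starProjection x
  rcases eq_or_ne y 0 with hy | hy
  · simpa [y, hy] using hx
  have hy_not_fixed : T y ≠ y := fun hfix ↦
    hy (Submodule.inf_orthogonal_eq_bot _ |>.le ⟨mem_fixedSubspace.mpr hfix,
      T.fixedSubspaceᗮ.starProjection_apply_mem x⟩)
  calc ‖T y‖ < ‖y‖ := hT y hy_not_fixed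
    _ ≤ ‖x‖ := Submodule.norm_starProjection_apply_le _ x

end FiniteDimensional

/-- In `ℝⁿ`, a linear `α`-averaged operator `T` satisfies
`‖T^k x - P_{Fix T} x‖ ≤ ‖T ∘ P_{(Fix T)ᗮ}‖^k ‖x - P_{Fix T} x‖`, and
`‖T ∘ P_{(Fix T)ᗮ}‖ < 1`, so `T^k x` converges linearly to `P_{Fix T} x`. -/
theorem averaged_linear_convergence {n : ℕ}
    (α : ℝ) (hα : α ∈ Set.Ioo (0 : ℝ) 1)
    (T : EuclideanSpace ℝ (Fin n) →L[ℝ] EuclideanSpace ℝ (Fin n))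
    (G : EuclideanSpace ℝ (Fin n) → EuclideanSpace ℝ (Fin n))
    (hG : ∀ x y, ‖G x - G y‖ ≤ ‖x - y‖)
    (hT : ∀ x, T x = (1 - α) • x + α • G x) :
    ‖T ∘L ((LinearMap.ker ((1 - T : EuclideanSpace ℝ (Fin n) →L[ℝ] EuclideanSpace ℝ (Fin n)) : EuclideanSpace ℝ (Fin n) →ₗ[ℝ] EuclideanSpace ℝ (Fin n)))ᗮ.subtypeL ∘L
        (LinearMap.ker ((1 - T : EuclideanSpace ℝ (Fin n) →L[ℝ] EuclideanSpace ℝ (Fin n)) : EuclideanSpace ℝ (Fin n) →ₗ[ℝ] EuclideanSpace ℝ (Fin n)))ᗮ.orthogonalProjectionOnto)‖ < 1 ∧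
    ∀ (x : EuclideanSpace ℝ (Fin n)) (k : ℕ),
      ‖(T ^ k) x - ((LinearMap.ker ((1 - T : EuclideanSpace ℝ (Fin n) →L[ℝ] EuclideanSpace ℝ (Fin n)) : EuclideanSpace ℝ (Fin n) →ₗ[ℝ] EuclideanSpace ℝ (Fin n))).subtypeL ∘L
          (LinearMap.ker ((1 - T : EuclideanSpace ℝ (Fin n) →L[ℝ] EuclideanSpace ℝ (Fin n)) : EuclideanSpace ℝ (Fin n) →ₗ[ℝ] EuclideanSpace ℝ (Fin n))).orthogonalProjectionOnto) x‖ ≤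
        ‖T ∘L ((LinearMap.ker ((1 - T : EuclideanSpace ℝ (Fin n) →L[ℝ] EuclideanSpace ℝ (Fin n)) : EuclideanSpace ℝ (Fin n) →ₗ[ℝ] EuclideanSpace ℝ (Fin n)))ᗮ.subtypeL ∘L
            (LinearMap.ker ((1 - T : EuclideanSpace ℝ (Fin n) →L[ℝ] EuclideanSpace ℝ (Fin n)) : EuclideanSpace ℝ (Fin n) →ₗ[ℝ] EuclideanSpace ℝ (Fin n)))ᗮ.orthogonalProjectionOnto)‖ ^ k *
          ‖x - ((LinearMap.ker ((1 - T : EuclideanSpace ℝ (Fin n) →L[ℝ] EuclideanSpace ℝ (Fin n)) : EuclideanSpace ℝ (Fin n) →ₗ[ℝ] EuclideanSpace ℝ (Fin n))).subtypeL ∘L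
              (LinearMap.ker ((1 - T : EuclideanSpace ℝ (Fin n) →L[ℝ] EuclideanSpace ℝ (Fin n)) : EuclideanSpace ℝ (Fin n) →ₗ[ℝ] EuclideanSpace ℝ (Fin n))).orthogonalProjectionOnto) x‖ := by
  obtain ⟨hα0, hα1⟩ := hα
  exact ⟨T.opNorm_comp_starProjection_orthogonal_lt_one fun x ↦
      norm_apply_lt_of_averaged hα0 hα1 hG hT,
    T.norm_pow_apply_sub_starProjection_le (opNorm_le_one_of_averaged hα0 hα1.le hG hT)⟩
end

section
/- Let T₁, T₂ : H → H be linear, self-adjoint isometries. Then Fix(T₂ ∘ T₁) = (Fix T₁ ∩ Fix T₂) ⊕ ((Fix T₁)^⊥ ∩ (Fix T₂)^⊥), an orthogonal direct sum. -/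
open scoped RealInnerProductSpace

/-!
A self-adjoint isometry `T` is an involution, so `Fix T = range (1 + T)`, and since `1 + T` is
symmetric, `(Fix T)ᗮ = ker (1 + T)`. If `T₂ T₁ x = x` then `T₁ x = T₂ x`, and
`x = ½ (x + T₁ x) + ½ (x - T₁ x)` splits `x` into a common fixed vector of `T₁, T₂` and a
common `(-1)`-eigenvector.
-/

namespace Module.End

variable {R M : Type*} [Ring R] [AddCommGroup M] [Module R M] {f g : Module.End R M}

lemma mem_ker_one_sub_iff {x : M} : x ∈ LinearMap.ker (1 - f) ↔ f x = x := by
  rw [LinearMap.mem_ker, LinearMap.sub_apply, one_apply, sub_eq_zero, eq_comm]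

lemma mem_ker_one_add_iff {x : M} : x ∈ LinearMap.ker (1 + f) ↔ f x = -x := by
  rw [LinearMap.mem_ker, LinearMap.add_apply, one_apply, add_eq_zero_iff_eq_neg']

lemma ker_one_sub_eq_range_one_add [Invertible (2 : R)] (hf : f * f = 1) :
    LinearMap.ker (1 - f) = LinearMap.range (1 + f) := by
  refine le_antisymm (fun x hx => ⟨⅟(2 : R) • x, ?_⟩) (LinearMap.range_le_ker_iff.2 ?_)
  · rw [← mul_eq_comp, mul_add, mul_one, sub_mul, one_mul, hf, sub_add_sub_cancel, sub_self]
  · rw [mem_ker_one_sub_iff] at hx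
    simp [hx]

lemma ker_one_sub_mul_eq_sup [Invertible (2 : R)] (hf : f * f = 1) (hg : g * g = 1) :
    LinearMap.ker (1 - g * f) = LinearMap.ker (1 - f) ⊓ LinearMap.ker (1 - g) ⊔
      LinearMap.ker (1 + f) ⊓ LinearMap.ker (1 + g) := by
  have hff (x : M) : f (f x) = x := LinearMap.congr_fun hf x
  have hgg (x : M) : g (g x) = x := LinearMap.congr_fun hg x
  apply le_antisymm
  · intro x hx
    rw [mem_ker_one_sub_iff, mul_apply] at hx
    have hgx : g x = f x := by simpa only [hx] using hgg (f x)
    refine Submodule.mem_sup.2 ⟨⅟(2 : R) • (x + f x), ?_, ⅟(2 : R) • (x - f x), ?_, ?_⟩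
    · simp only [Submodule.mem_inf, mem_ker_one_sub_iff, map_smul, map_add, hff, hgx, hx]
      constructor <;> rw [add_comm]
    · simp only [Submodule.mem_inf, mem_ker_one_add_iff, map_smul, map_sub, hff, hgx, hx]
      constructor <;> rw [← smul_neg, neg_sub]
    · rw [← smul_add, add_add_sub_cancel, ← two_smul R, smul_smul, invOf_mul_self, one_smul]
  · refine sup_le (fun x hx => ?_) (fun x hx => ?_) <;>
      obtain ⟨hfx, hgx⟩ := Submodule.mem_inf.1 hx <;> rw [mem_ker_one_sub_iff, mul_apply]
    · rw [mem_ker_one_sub_iff] at hfx hgx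
      rw [hfx, hgx]
    · rw [mem_ker_one_add_iff] at hfx hgx
      rw [hfx, map_neg, hgx, neg_neg]

end Module.End

namespace LinearMap.IsSymmetric

variable {𝕜 E : Type*} [RCLike 𝕜] [NormedAddCommGroup E] [InnerProductSpace 𝕜 E] {T : E →ₗ[𝕜] E}

lemma mul_self_eq_one_of_norm_map (hT : T.IsSymmetric) (hnorm : ∀ x, ‖T x‖ = ‖x‖) :
    T * T = 1 :=
  LinearMap.ext fun x => ext_inner_right 𝕜 fun y => by
    rw [Module.End.mul_apply, hT, (LinearMap.norm_map_iff_inner_map_map T).1 hnorm,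
      Module.End.one_apply]

lemma orthogonal_ker_one_sub (hT : T.IsSymmetric) (hTT : T * T = 1) :
    (LinearMap.ker (1 - T))ᗮ = LinearMap.ker (1 + T) := by
  rw [Module.End.ker_one_sub_eq_range_one_add hTT, (IsSymmetric.one.add hT).orthogonal_range]

end LinearMap.IsSymmetric

/-- For linear self-adjoint isometries `T₁, T₂`,
`Fix (T₂ ∘ T₁) = (Fix T₁ ⊓ Fix T₂) ⊕ ((Fix T₁)ᗮ ⊓ (Fix T₂)ᗮ)` (orthogonal direct sum). -/
theorem fix_comp_selfAdjoint_isometries {H : Type*} [NormedAddCommGroup H]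
    [InnerProductSpace ℝ H] [CompleteSpace H] (T₁ T₂ : H →L[ℝ] H)
    (hsa₁ : IsSelfAdjoint T₁) (hsa₂ : IsSelfAdjoint T₂)
    (hiso₁ : ∀ x : H, ‖T₁ x‖ = ‖x‖) (hiso₂ : ∀ x : H, ‖T₂ x‖ = ‖x‖) :
    LinearMap.ker ((1 - T₂ ∘L T₁ : H →L[ℝ] H) : H →ₗ[ℝ] H) =
      (LinearMap.ker ((1 - T₁ : H →L[ℝ] H) : H →ₗ[ℝ] H) ⊓ LinearMap.ker ((1 - T₂ : H →L[ℝ] H) : H →ₗ[ℝ] H)) ⊔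
        ((LinearMap.ker ((1 - T₁ : H →L[ℝ] H) : H →ₗ[ℝ] H))ᗮ ⊓ (LinearMap.ker ((1 - T₂ : H →L[ℝ] H) : H →ₗ[ℝ] H))ᗮ) ∧
    (LinearMap.ker ((1 - T₁ : H →L[ℝ] H) : H →ₗ[ℝ] H) ⊓ LinearMap.ker ((1 - T₂ : H →L[ℝ] H) : H →ₗ[ℝ] H)) ⊓
        ((LinearMap.ker ((1 - T₁ : H →L[ℝ] H) : H →ₗ[ℝ] H))ᗮ ⊓ (LinearMap.ker ((1 - T₂ : H →L[ℝ] H) : H →ₗ[ℝ] H))ᗮ) = ⊥ ∧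
    ∀ u ∈ LinearMap.ker ((1 - T₁ : H →L[ℝ] H) : H →ₗ[ℝ] H) ⊓ LinearMap.ker ((1 - T₂ : H →L[ℝ] H) : H →ₗ[ℝ] H),
      ∀ v ∈ (LinearMap.ker ((1 - T₁ : H →L[ℝ] H) : H →ₗ[ℝ] H))ᗮ ⊓ (LinearMap.ker ((1 - T₂ : H →L[ℝ] H) : H →ₗ[ℝ] H))ᗮ,
        ⟪u, v⟫ = 0 := by
  have h₁ := hsa₁.isSymmetric.mul_self_eq_one_of_norm_map hiso₁
  have h₂ := hsa₂.isSymmetric.mul_self_eq_one_of_norm_map hiso₂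
  push_cast
  refine ⟨?_, ?_, fun u hu v hv => Submodule.inner_right_of_mem_orthogonal hu.1 hv.1⟩
  · rw [hsa₁.isSymmetric.orthogonal_ker_one_sub h₁, hsa₂.isSymmetric.orthogonal_ker_one_sub h₂]
    exact Module.End.ker_one_sub_mul_eq_sup h₁ h₂
  · exact le_bot_iff.1 <| (inf_le_inf inf_le_left inf_le_left).trans (Submodule.inf_orthogonal_eq_bot _).le
end

section
/- Let U₁, U₂ be closed linear subspaces of a real Hilbert space H and let T = (1/2)(Id + R_{U₂} R_{U₁}) be the Douglas–Rachford operator. Then Fix T = Fix(R_{U₂} R_{U₁}) = (U₁ ∩ U₂) ⊕ (U₁^⊥ ∩ U₂^⊥). -/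
/-!
Since `1 - T = ½ (1 - R₂ R₁)`, the operators `T` and `R₂ R₁` have the same fixed points. As `R₂`
is an involution, `R₂ R₁ x = x` iff `R₁ x = R₂ x`, i.e. `P₁ x = P₂ x`; such an `x` splits as
`P₁ x + (x - P₁ x)` with `P₁ x ∈ U₁ ∩ U₂` and `x - P₁ x ∈ U₁ᗮ ∩ U₂ᗮ`.
-/

theorem LinearMap.ker_one_sub_half_smul_one_add {K V : Type*} [Field K] [NeZero (2 : K)]
    [AddCommGroup V] [Module K V] (S : V →ₗ[K] V) :
    ker (1 - (1 / 2 : K) • (1 + S)) = ker (1 - S) := by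
  have : 1 - (1 / 2 : K) • (1 + S) = (1 / 2 : K) • (1 - S) := by
    linear_combination (norm := module) (sub_half (1 : K)) • (1 : V →ₗ[K] V)
  rw [this, ker_smul _ _ (by simp [NeZero.ne])]

namespace Submodule

variable {𝕜 E : Type*} [RCLike 𝕜] [NormedAddCommGroup E] [InnerProductSpace 𝕜 E]
  (K L : Submodule 𝕜 E)

theorem inf_inf_orthogonal_inf_eq_bot : (K ⊓ L) ⊓ (Kᗮ ⊓ Lᗮ) = ⊥ :=
  (K.orthogonal_disjoint.mono inf_le_left inf_le_left).eq_bot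

variable [K.HasOrthogonalProjection] [L.HasOrthogonalProjection]

theorem coe_reflection_eq_two_smul_sub_one :
    (K.reflection : E →L[𝕜] E) = (2 : 𝕜) • (K.subtypeL ∘L K.orthogonalProjectionOnto) - 1 := by
  ext x
  simp [reflection_apply, two_smul]

theorem reflection_reflection_eq_self_iff (x : E) :
    L.reflection (K.reflection x) = x ↔ K.starProjection x = L.starProjection x := by
  rw [← L.reflection_symm, LinearIsometryEquiv.symm_apply_eq, reflection_apply, reflection_apply,
    sub_left_inj, ← Nat.cast_smul_eq_nsmul 𝕜, ← Nat.cast_smul_eq_nsmul 𝕜]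
  exact (smul_right_injective E two_ne_zero).eq_iff

theorem starProjection_eq_iff_mem_sup (x : E) :
    K.starProjection x = L.starProjection x ↔ x ∈ (K ⊓ L) ⊔ (Kᗮ ⊓ Lᗮ) := by
  constructor
  · intro h
    have hp : K.starProjection x ∈ K ⊓ L :=
      ⟨K.starProjection_apply_mem x, h ▸ L.starProjection_apply_mem x⟩
    have hq : x - K.starProjection x ∈ Kᗮ ⊓ Lᗮ :=
      ⟨K.sub_starProjection_mem_orthogonal x, h ▸ L.sub_starProjection_mem_orthogonal x⟩
    simpa using add_mem_sup hp hq
  · intro h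
    obtain ⟨a, ⟨haK, haL⟩, b, ⟨hbK, hbL⟩, rfl⟩ := mem_sup.mp h
    rw [map_add, map_add, starProjection_eq_self_iff.mpr haK, starProjection_eq_self_iff.mpr haL,
      (starProjection_apply_eq_zero_iff K).mpr hbK, (starProjection_apply_eq_zero_iff L).mpr hbL]

end Submodule

theorem fix_douglasRachford_general {H : Type*} [NormedAddCommGroup H] [InnerProductSpace ℝ H]
    (U₁ U₂ : Submodule ℝ H)
    [U₁.HasOrthogonalProjection] [U₂.HasOrthogonalProjection]
    (R₁ R₂ T : H →L[ℝ] H)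
    (hR₁ : R₁ = (2 : ℝ) • (U₁.subtypeL ∘L U₁.orthogonalProjectionOnto) - 1)
    (hR₂ : R₂ = (2 : ℝ) • (U₂.subtypeL ∘L U₂.orthogonalProjectionOnto) - 1)
    (hT : T = (1 / 2 : ℝ) • (1 + R₂ ∘L R₁)) :
    LinearMap.ker ((1 - T : H →L[ℝ] H) : H →ₗ[ℝ] H) = LinearMap.ker ((1 - R₂ ∘L R₁ : H →L[ℝ] H) : H →ₗ[ℝ] H) ∧
      LinearMap.ker ((1 - T : H →L[ℝ] H) : H →ₗ[ℝ] H) = (U₁ ⊓ U₂) ⊔ (U₁ᗮ ⊓ U₂ᗮ) ∧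
      (U₁ ⊓ U₂) ⊓ (U₁ᗮ ⊓ U₂ᗮ) = ⊥ := by
  have hker_T : LinearMap.ker ((1 - T : H →L[ℝ] H) : H →ₗ[ℝ] H) =
      LinearMap.ker ((1 - R₂ ∘L R₁ : H →L[ℝ] H) : H →ₗ[ℝ] H) := by
    subst hT
    exact LinearMap.ker_one_sub_half_smul_one_add _
  refine ⟨hker_T, ?_, U₁.inf_inf_orthogonal_inf_eq_bot U₂⟩
  rw [← U₁.coe_reflection_eq_two_smul_sub_one] at hR₁
  rw [← U₂.coe_reflection_eq_two_smul_sub_one] at hR₂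
  subst hR₁ hR₂
  ext x
  rw [hker_T, ← U₁.starProjection_eq_iff_mem_sup, ← U₁.reflection_reflection_eq_self_iff]
  simpa [sub_eq_zero] using eq_comm

/-- For closed linear subspaces `U₁, U₂` of a real Hilbert space and the Douglas–Rachford
operator `T = (1/2)(Id + R_{U₂} R_{U₁})`,
`Fix T = Fix (R_{U₂} R_{U₁}) = (U₁ ⊓ U₂) ⊕ (U₁ᗮ ⊓ U₂ᗮ)`. -/
theorem fix_douglasRachford {H : Type*} [NormedAddCommGroup H] [InnerProductSpace ℝ H]
    [CompleteSpace H] (U₁ U₂ : Submodule ℝ H)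
    [U₁.HasOrthogonalProjection] [U₂.HasOrthogonalProjection]
    (R₁ R₂ T : H →L[ℝ] H)
    (hR₁ : R₁ = (2 : ℝ) • (U₁.subtypeL ∘L U₁.orthogonalProjectionOnto) - 1)
    (hR₂ : R₂ = (2 : ℝ) • (U₂.subtypeL ∘L U₂.orthogonalProjectionOnto) - 1)
    (hT : T = (1 / 2 : ℝ) • (1 + R₂ ∘L R₁)) :
    LinearMap.ker ((1 - T : H →L[ℝ] H) : H →ₗ[ℝ] H) = LinearMap.ker ((1 - R₂ ∘L R₁ : H →L[ℝ] H) : H →ₗ[ℝ] H) ∧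
      LinearMap.ker ((1 - T : H →L[ℝ] H) : H →ₗ[ℝ] H) = (U₁ ⊓ U₂) ⊔ (U₁ᗮ ⊓ U₂ᗮ) ∧
      (U₁ ⊓ U₂) ⊓ (U₁ᗮ ⊓ U₂ᗮ) = ⊥ :=
  fix_douglasRachford_general U₁ U₂ R₁ R₂ T hR₁ hR₂ hT
end

section
/- Let C and D be nonempty closed convex subsets of a real Hilbert space H such that C ⊥ D (every element of C is orthogonal to every element of D). Then C + D is closed. -/
open scoped Pointwise RealInnerProductSpace

/-- If `C` and `D` are nonempty closed convex subsets of a real Hilbert space with `C ⊥ D`,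
then `C + D` is closed. -/
theorem add_closed_of_orthogonal {H : Type*} [NormedAddCommGroup H] [InnerProductSpace ℝ H]
    [CompleteSpace H] (C D : Set H) (hCne : C.Nonempty) (hDne : D.Nonempty)
    (hCcl : IsClosed C) (hDcl : IsClosed D) (hCco : Convex ℝ C) (hDco : Convex ℝ D)
    (hCD : ∀ c ∈ C, ∀ d ∈ D, ⟪c, d⟫ = 0) :
    IsClosed (C + D) := by
  apply IsSeqClosed.isClosed
  intro f x hf hfx
  have hmem : ∀ n, ∃ c ∈ C, ∃ d ∈ D, c + d = f n := fun n => hf n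
  choose c hc d hd hcd using hmem
  -- key: ‖c m - c n‖ ≤ ‖f m - f n‖
  have key : ∀ m n, ‖c m - c n‖ ≤ ‖f m - f n‖ := by
    intro m n
    have horth : ⟪c m - c n, d m - d n⟫ = 0 := by
      rw [inner_sub_left, inner_sub_right, inner_sub_right,
        hCD _ (hc m) _ (hd m), hCD _ (hc m) _ (hd n),
        hCD _ (hc n) _ (hd m), hCD _ (hc n) _ (hd n)]
      ring
    have hsum : f m - f n = (c m - c n) + (d m - d n) := by
      rw [← hcd m, ← hcd n]; abel
    have hsq := norm_add_sq_real (c m - c n) (d m - d n)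
    rw [← hsum, horth] at hsq
    nlinarith [norm_nonneg (c m - c n), norm_nonneg (f m - f n), sq_nonneg ‖d m - d n‖]
  have hfC : CauchySeq f := hfx.cauchySeq
  have hcC : CauchySeq c := by
    rw [Metric.cauchySeq_iff] at hfC ⊢
    intro ε hε
    obtain ⟨N, hN⟩ := hfC ε hε
    exact ⟨N, fun m hm n hn => lt_of_le_of_lt (by simpa [dist_eq_norm] using key m n) (hN m hm n hn)⟩
  obtain ⟨cl, hcl⟩ := cauchySeq_tendsto_of_complete hcC
  have hclC : cl ∈ C := hCcl.mem_of_tendsto hcl (Filter.Eventually.of_forall hc)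
  have hdl : Filter.Tendsto d Filter.atTop (nhds (x - cl)) := by
    exact (hfx.sub hcl).congr fun n => by rw [← hcd n]; abel
  have hdlD : x - cl ∈ D := hDcl.mem_of_tendsto hdl (Filter.Eventually.of_forall hd)
  exact ⟨cl, hclC, x - cl, hdlD, by show cl + (x - cl) = x; abel⟩
end

section
/- Let T be a nonexpansive linear operator on a real Hilbert space H. Then Fix T = Fix T*, where T* is the adjoint of T. -/
open scoped InnerProductSpace

section

variable {𝕜 E : Type*} [RCLike 𝕜] [NormedAddCommGroup E] [InnerProductSpace 𝕜 E]

-- `‖y - x‖² = ‖y‖² - 2 re ⟪y, x⟫ + ‖x‖² = ‖y‖² - ‖x‖² ≤ 0`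
theorem eq_of_norm_le_of_re_inner_eq_norm_sq {x y : E} (hle : ‖y‖ ≤ ‖x‖)
    (hinner : RCLike.re ⟪y, x⟫_𝕜 = ‖x‖ ^ 2) : y = x := by
  have hsq : ‖y - x‖ ^ 2 ≤ 0 := by
    rw [@norm_sub_sq 𝕜, hinner]
    nlinarith [norm_nonneg y]
  rw [← sub_eq_zero, ← norm_eq_zero]
  exact pow_eq_zero_iff two_ne_zero |>.mp (le_antisymm hsq (sq_nonneg _))

theorem ContinuousLinearMap.adjoint_apply_eq_of_apply_eq [CompleteSpace E] {T : E →L[𝕜] E}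
    (hT : ‖T‖ ≤ 1) {x : E} (hx : T x = x) : adjoint T x = x := by
  refine eq_of_norm_le_of_re_inner_eq_norm_sq (𝕜 := 𝕜) ?_ ?_
  · have hT' : ‖adjoint T‖ ≤ 1 := by rwa [LinearIsometryEquiv.norm_map]
    simpa only [one_mul] using (adjoint T).le_of_opNorm_le hT' x
  · rw [adjoint_inner_left, hx, inner_self_eq_norm_sq]

end

/-- For a nonexpansive bounded linear operator `T` on a real Hilbert space,
`Fix T = Fix T*`. -/
theorem fix_eq_fix_adjoint {H : Type*} [NormedAddCommGroup H] [InnerProductSpace ℝ H]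
    [CompleteSpace H] (T : H →L[ℝ] H) (hT : ∀ x : H, ‖T x‖ ≤ ‖x‖) :
    {x : H | T x = x} = {x : H | ContinuousLinearMap.adjoint T x = x} := by
  have hT₁ : ‖T‖ ≤ 1 := T.opNorm_le_bound zero_le_one (by simpa using hT)
  ext x
  constructor
  · exact T.adjoint_apply_eq_of_apply_eq hT₁
  · intro hx
    simpa using (ContinuousLinearMap.adjoint T).adjoint_apply_eq_of_apply_eq
      (by rwa [LinearIsometryEquiv.norm_map]) hx
end

section
/- Let U₁, ..., U_m be closed linear subspaces of a real Hilbert space H and let T = P_{U_m} ∘ P_{U_{m-1}} ∘ ... ∘ P_{U_1}. Then T is nonexpansive and Fix T = Fix T* = Fix(TT*) = Fix(T*T) = ⋂_{i=1}^m U_i. -/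
/-! Each orthogonal projection is nonexpansive and, by Pythagoras, preserves the norm of `x` only
when it fixes `x`. Consequently a product of projections preserves `‖x‖` only when every factor
fixes `x`, so its fixed points are exactly `⋂ᵢ Uᵢ`. Since projections are self-adjoint, `T*` is
the product in the reverse order, and `T T*`, `T* T` are again products of the same projections. -/

theorem star_list_prod {R : Type*} [Monoid R] [StarMul R] (l : List R) :
    star l.prod = (l.map star).reverse.prod := by
  induction l with
  | nil => simp
  | cons a l ih => simp [ih]

theorem star_list_prod_of_forall_isSelfAdjoint {R : Type*} [Monoid R] [StarMul R] {l : List R}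
    (hl : ∀ a ∈ l, IsSelfAdjoint a) : star l.prod = l.reverse.prod := by
  rw [star_list_prod, List.map_congr_left hl, List.map_id']

theorem ContinuousLinearMap.mem_ker_one_sub_iff {R E : Type*} [Ring R] [AddCommGroup E]
    [Module R E] [TopologicalSpace E] [IsTopologicalAddGroup E] (S : E →L[R] E) (x : E) :
    x ∈ LinearMap.ker ((1 - S : E →L[R] E) : E →ₗ[R] E) ↔ S x = x := by
  simp [sub_eq_zero, eq_comm (a := x)]

theorem Submodule.starProjection_apply_eq_self_of_norm_eq {𝕜 E : Type*} [RCLike 𝕜]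
    [NormedAddCommGroup E] [InnerProductSpace 𝕜 E] (K : Submodule 𝕜 E)
    [K.HasOrthogonalProjection] {x : E} (hx : ‖K.starProjection x‖ = ‖x‖) :
    K.starProjection x = x :=
  K.starProjection_eq_self_iff.2 ((K.mem_iff_norm_starProjection x).2 hx)

section NormRigid

variable {R E : Type*} [Semiring R] [SeminormedAddCommGroup E] [Module R E]
  {l : List (E →L[R] E)}

theorem norm_list_prod_apply_le (hle : ∀ f ∈ l, ∀ x, ‖f x‖ ≤ ‖x‖) (x : E) :
    ‖l.prod x‖ ≤ ‖x‖ := by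
  induction l with
  | nil => simp
  | cons f l ih =>
    rw [List.forall_mem_cons] at hle
    exact (hle.1 _).trans (ih hle.2)

theorem list_prod_apply_eq_self {x : E} (h : ∀ f ∈ l, f x = x) : l.prod x = x := by
  induction l with
  | nil => simp
  | cons f l ih =>
    rw [List.forall_mem_cons] at h
    rw [List.prod_cons, mul_apply_eq_comp, ih h.2, h.1]

theorem forall_apply_eq_self_of_norm_list_prod_apply_eq (hle : ∀ f ∈ l, ∀ x, ‖f x‖ ≤ ‖x‖)
    (hrigid : ∀ f ∈ l, ∀ x, ‖f x‖ = ‖x‖ → f x = x) {x : E} (hx : ‖l.prod x‖ = ‖x‖) :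
    ∀ f ∈ l, f x = x := by
  induction l with
  | nil => simp
  | cons f l ih =>
    rw [List.forall_mem_cons] at hle hrigid ⊢
    rw [List.prod_cons, mul_apply_eq_comp] at hx
    have htail : ‖l.prod x‖ = ‖x‖ :=
      le_antisymm (norm_list_prod_apply_le hle.2 x) (hx ▸ hle.1 _)
    have hfix : ∀ g ∈ l, g x = x := ih hle.2 hrigid.2 htail
    rw [list_prod_apply_eq_self hfix] at hx
    exact ⟨hrigid.1 x hx, hfix⟩

theorem list_prod_apply_eq_self_iff (hle : ∀ f ∈ l, ∀ x, ‖f x‖ ≤ ‖x‖)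
    (hrigid : ∀ f ∈ l, ∀ x, ‖f x‖ = ‖x‖ → f x = x) {x : E} :
    l.prod x = x ↔ ∀ f ∈ l, f x = x :=
  ⟨fun hx => forall_apply_eq_self_of_norm_list_prod_apply_eq hle hrigid (by rw [hx]),
    list_prod_apply_eq_self⟩

end NormRigid

/-- For closed linear subspaces `U₁, …, U_m` and `T = P_{U_m} ∘ ⋯ ∘ P_{U_1}`, the operator
`T` is nonexpansive and `Fix T = Fix T* = Fix (T T*) = Fix (T* T) = ⋂ᵢ Uᵢ`. -/
theorem fix_prod_projections {H : Type*} [NormedAddCommGroup H] [InnerProductSpace ℝ H]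
    [CompleteSpace H] {m : ℕ} (U : Fin m → Submodule ℝ H)
    [∀ i, Submodule.HasOrthogonalProjection (U i)] (T : H →L[ℝ] H)
    (hT : T = ((List.ofFn fun i : Fin m =>
        (U i).subtypeL ∘L Submodule.orthogonalProjectionOnto (U i)).reverse).prod) :
    (∀ x : H, ‖T x‖ ≤ ‖x‖) ∧
      LinearMap.ker ((1 - T : H →L[ℝ] H) : H →ₗ[ℝ] H) = ⨅ i, U i ∧
      LinearMap.ker ((1 - ContinuousLinearMap.adjoint T : H →L[ℝ] H) : H →ₗ[ℝ] H) = ⨅ i, U i ∧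
      LinearMap.ker ((1 - T * ContinuousLinearMap.adjoint T : H →L[ℝ] H) : H →ₗ[ℝ] H) = ⨅ i, U i ∧
      LinearMap.ker ((1 - ContinuousLinearMap.adjoint T * T : H →L[ℝ] H) : H →ₗ[ℝ] H) = ⨅ i, U i := by
  set l := List.ofFn fun i => (U i).starProjection
  have hle : ∀ f ∈ l, ∀ x, ‖f x‖ ≤ ‖x‖ :=
    List.forall_mem_ofFn_iff.2 fun i => (U i).norm_starProjection_apply_le
  have hrigid : ∀ f ∈ l, ∀ x, ‖f x‖ = ‖x‖ → f x = x :=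
    List.forall_mem_ofFn_iff.2 fun i _ => (U i).starProjection_apply_eq_self_of_norm_eq
  have hfix (x : H) : (∀ f ∈ l, f x = x) ↔ x ∈ ⨅ i, U i := by
    simp [l, Submodule.mem_iInf, Submodule.starProjection_eq_self_iff]
  have hT : T = l.reverse.prod := hT
  have hTadj : ContinuousLinearMap.adjoint T = l.prod := by
    rw [hT, ← ContinuousLinearMap.star_eq_adjoint, star_list_prod_of_forall_isSelfAdjoint
      fun f hf => List.forall_mem_ofFn_iff.2 (fun i => isSelfAdjoint_starProjection (U i)) f
        (List.mem_reverse.1 hf), List.reverse_reverse]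
  have hker (l' : List (H →L[ℝ] H)) (hl' : ∀ f, f ∈ l' ↔ f ∈ l) :
      LinearMap.ker ((1 - l'.prod : H →L[ℝ] H) : H →ₗ[ℝ] H) = ⨅ i, U i := by
    ext x
    rw [ContinuousLinearMap.mem_ker_one_sub_iff, list_prod_apply_eq_self_iff
      (fun f hf => hle f ((hl' f).1 hf)) (fun f hf => hrigid f ((hl' f).1 hf)), ← hfix]
    simp only [hl']
  refine ⟨hT ▸ norm_list_prod_apply_le fun f hf => hle f (List.mem_reverse.1 hf),
    hT ▸ hker _ (by simp), hTadj ▸ hker _ (by simp), ?_, ?_⟩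
  · rw [hTadj, hT, ← List.prod_append]
    exact hker _ (by simp)
  · rw [hTadj, hT, ← List.prod_append]
    exact hker _ (by simp)
end
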